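/- arXiv:1212.1414 — 2 statements merged into one kernel-verified Lean document; each statement's English description precedes it below -/
import Mathlib

section
/- Modified fundamental theorem of Riemann integration (Botsko): if g : [a,b] → ℝ is continuous, has a right derivative g₊′(x) at every point of [a,b), and g₊′ is Riemann integrable on [a,b], then g(b) − g(a) = ∫_a^b g₊′(x) dx. -/
open Set

/-- Botsko: if `g` is continuous on `[a,b]`, has a right derivative
`g'(x)` at every point of `[a,b)`, and `g'` is (Riemann, hence interval)
integrable on `[a,b]`, then `g(b) − g(a) = ∫_a^b g'`. -/
theorem botsko_ftc (g g' : ℝ → ℝ) (a b : ℝ) (hab : a < b)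
    (hg : ContinuousOn g (Set.Icc a b))
    (hg' : ∀ x ∈ Set.Ico a b, HasDerivWithinAt g (g' x) (Set.Ici x) x)
    (hint : IntervalIntegrable g' MeasureTheory.volume a b) :
    g b - g a = ∫ x in a..b, g' x :=
  (intervalIntegral.integral_eq_sub_of_hasDeriv_right_of_le hab.le hg
    (fun x hx => (hg' x (Ioo_subset_Ico_self hx)).mono Ioi_subset_Ici_self) hint).symm
end

section
/- If a causal functional F : ℝ≥0 × Ω → ℝ is continuous with respect to the Dupire pseudo-metric d_Dupire((t,ω),(t̄,ω̄)) = |t − t̄| + sup_{s ≤ t∨t̄} |ω(s∧t) − ω̄(s∧t̄)|, and ω is a continuous path, then for every sequence of partitions (π(n)) converging to the identity, F(t, ω^{π(n)}) → F(t, ω) uniformly for t in compact intervals. -/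
/-! Since `ω` is uniformly continuous on `[0, T]` and `ω^π(s) = ω(t_k)` with `|s - t_k|` at most
the mesh of `π`, the stopped paths of `ω^{π(n)}` and `ω` are uniformly close for fine partitions;
continuity of `F` for the Dupire metric, applied at equal times, then gives the uniform
convergence. -/

open scoped NNReal
open Filter Topology Set

noncomputable section

/-- The space of paths `ℝ≥0 → ℝ^d`. -/
abbrev PathD (d : ℕ) := ℝ≥0 → (Fin d → ℝ)

/-- Càdlàg: right-continuous with left limits. -/
def Cadlag {d : ℕ} (ω : PathD d) : Prop :=
  (∀ t, ContinuousWithinAt ω (Set.Ici t) t) ∧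
  (∀ t : ℝ≥0, 0 < t → ∃ l, Filter.Tendsto ω (nhdsWithin t (Set.Iio t)) (nhds l))

/-- The stopped path `ω_{∧t}(s) = ω(s ∧ t)`. -/
def stopped {d : ℕ} (ω : PathD d) (t : ℝ≥0) : PathD d := fun s => ω (min s t)

/-- The perturbed path `ω^{t,r}(s) = ω(s ∧ t) + r·1_{s ≥ t}`. -/
def perturb {d : ℕ} (ω : PathD d) (t : ℝ≥0) (r : Fin d → ℝ) : PathD d :=
  fun s => ω (min s t) + if t ≤ s then r else 0

/-- Index of the nearest partition point to the left of `t`. -/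
def lastIdx (π : ℕ → ℝ≥0) (t : ℝ≥0) : ℕ := sSup {k | π k ≤ t}

/-- The piecewise constant approximation `ω^π` of `ω` along the partition `π`:
`ω^π(t) = ω(0) + Σ_k (ω(t_k) − ω(t_{k-1}))·1_{t ≥ t_k}`, equivalently
`ω^π(t) = ω(t_k)` for `t ∈ [t_k, t_{k+1})`. -/
def pcApprox {d : ℕ} (π : ℕ → ℝ≥0) (ω : PathD d) : PathD d :=
  fun t => ω (π (lastIdx π t))

section LastIdx

variable {π : ℕ → ℝ≥0}

theorem bddAbove_setOf_le_of_tendsto_atTop (hπtop : Tendsto π atTop atTop) (t : ℝ≥0) :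
    BddAbove {k | π k ≤ t} := by
  obtain ⟨M, hM⟩ := eventually_atTop.mp (hπtop.eventually_gt_atTop t)
  refine ⟨M, fun k hk => ?_⟩
  by_contra hMk
  exact (hM k (not_le.mp hMk).le).not_ge hk

theorem apply_lastIdx_le (hπ0 : π 0 = 0) (hπtop : Tendsto π atTop atTop) (t : ℝ≥0) :
    π (lastIdx π t) ≤ t :=
  Nat.sSup_mem ⟨0, by simp [hπ0]⟩ (bddAbove_setOf_le_of_tendsto_atTop hπtop t)

theorem lt_apply_lastIdx_succ (hπtop : Tendsto π atTop atTop) (t : ℝ≥0) :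
    t < π (lastIdx π t + 1) := by
  by_contra h
  have : lastIdx π t + 1 ≤ lastIdx π t :=
    le_csSup (bddAbove_setOf_le_of_tendsto_atTop hπtop t) (not_lt.mp h)
  omega

theorem dist_apply_lastIdx_le (hπ0 : π 0 = 0) (hπtop : Tendsto π atTop atTop) (t : ℝ≥0) :
    dist (π (lastIdx π t)) t ≤ (π (lastIdx π t + 1) : ℝ) - π (lastIdx π t) := by
  have hle : (π (lastIdx π t) : ℝ) ≤ t := by exact_mod_cast apply_lastIdx_le hπ0 hπtop t
  have hlt : (t : ℝ) < π (lastIdx π t + 1) := by exact_mod_cast lt_apply_lastIdx_succ hπtop t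
  rw [NNReal.dist_eq, abs_sub_comm, abs_of_nonneg (sub_nonneg.mpr hle)]
  linarith

end LastIdx

theorem exists_mesh_forall_norm_pcApprox_sub_lt {d : ℕ} {ω : PathD d} (hω : Continuous ω)
    (T : ℝ≥0) {δ : ℝ} (hδ : 0 < δ) :
    ∃ η > 0, ∀ π : ℕ → ℝ≥0, π 0 = 0 → Tendsto π atTop atTop →
      (∀ k, (π (k + 1) : ℝ) - π k < η) → ∀ s ≤ T, ‖pcApprox π ω s - ω s‖ < δ := by
  obtain ⟨η, hη, hωη⟩ := Metric.uniformContinuousOn_iff.mp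
    (isCompact_Icc.uniformContinuousOn_of_continuous hω.continuousOn :
      UniformContinuousOn ω (Icc 0 T)) δ hδ
  refine ⟨η, hη, fun π hπ0 hπtop hmesh s hs => ?_⟩
  rw [← dist_eq_norm]
  refine hωη _ ⟨zero_le, (apply_lastIdx_le hπ0 hπtop s).trans hs⟩ _ ⟨zero_le, hs⟩ ?_
  exact (dist_apply_lastIdx_le hπ0 hπtop s).trans_lt (hmesh _)

theorem dupire_continuous_regular_general {d : ℕ} (F : ℝ≥0 → PathD d → ℝ)
    (hFcont : ∀ T : ℝ≥0, ∀ ε : ℝ, 0 < ε → ∃ δ : ℝ, 0 < δ ∧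
      ∀ t tb : ℝ≥0, t ≤ T → tb ≤ T → ∀ ω ωb : PathD d,
        |(t : ℝ) - (tb : ℝ)| < δ → (∀ s, ‖stopped ω t s - stopped ωb tb s‖ < δ) →
          |F t ω - F tb ωb| < ε)
    (ω : PathD d) (hω : Continuous ω)
    (π : ℕ → ℕ → ℝ≥0)
    (hπ0 : ∀ n, π n 0 = 0)
    (hπtop : ∀ n, Filter.Tendsto (π n) Filter.atTop Filter.atTop)
    (hmesh : ∀ ε : ℝ, 0 < ε → ∃ N, ∀ n ≥ N, ∀ k, (π n (k + 1) : ℝ) - (π n k : ℝ) ≤ ε) :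
    ∀ T : ℝ≥0, TendstoUniformlyOn (fun n t => F t (pcApprox (π n) ω))
      (fun t => F t ω) Filter.atTop (Set.Iic T) := by
  intro T
  rw [Metric.tendstoUniformlyOn_iff]
  intro ε hε
  obtain ⟨δ, hδ, hF⟩ := hFcont T ε hε
  obtain ⟨η, hη, hclose⟩ := exists_mesh_forall_norm_pcApprox_sub_lt hω T hδ
  obtain ⟨N, hN⟩ := hmesh (η / 2) (half_pos hη)
  filter_upwards [eventually_ge_atTop N] with n hn t ht
  rw [Real.dist_eq, abs_sub_comm]
  refine hF t t ht ht _ _ (by simpa using hδ) fun s => ?_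
  exact hclose (π n) (hπ0 n) (hπtop n) (fun k => (hN n hn k).trans_lt (half_lt_self hη))
    _ ((min_le_right s t).trans ht)

/-- if a causal functional `F` is (uniformly on compacts)
continuous with respect to the Dupire pseudo-metric
`d((t,ω),(t̄,ω̄)) = |t − t̄| + sup_s |ω(s∧t) − ω̄(s∧t̄)|` and `ω` is a continuous
path, then `F(t, ω^{π(n)}) → F(t, ω)` uniformly on compact time intervals, for
every sequence of partitions converging to the identity. -/
theorem dupire_continuous_regular {d : ℕ} (F : ℝ≥0 → PathD d → ℝ)
    (hFcausal : ∀ (t : ℝ≥0) (ω : PathD d), F t (stopped ω t) = F t ω)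
    (hFcont : ∀ T : ℝ≥0, ∀ ε : ℝ, 0 < ε → ∃ δ : ℝ, 0 < δ ∧
      ∀ t tb : ℝ≥0, t ≤ T → tb ≤ T → ∀ ω ωb : PathD d,
        |(t : ℝ) - (tb : ℝ)| < δ → (∀ s, ‖stopped ω t s - stopped ωb tb s‖ < δ) →
          |F t ω - F tb ωb| < ε)
    (ω : PathD d) (hω : Continuous ω)
    (π : ℕ → ℕ → ℝ≥0)
    (hπ0 : ∀ n, π n 0 = 0) (hπmono : ∀ n, Monotone (π n))
    (hπtop : ∀ n, Filter.Tendsto (π n) Filter.atTop Filter.atTop)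
    (hmesh : ∀ ε : ℝ, 0 < ε → ∃ N, ∀ n ≥ N, ∀ k, (π n (k + 1) : ℝ) - (π n k : ℝ) ≤ ε) :
    ∀ T : ℝ≥0, TendstoUniformlyOn (fun n t => F t (pcApprox (π n) ω))
      (fun t => F t ω) Filter.atTop (Set.Iic T) :=
  dupire_continuous_regular_general F hFcont ω hω π hπ0 hπtop hmesh
end
end
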